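/- arXiv:1804.10534 — 3 statements merged into one kernel-verified Lean document; each statement's English description precedes it below -/
import Mathlib

section
/- Let V, W be finite-dimensional real normed vector spaces, r : V → W a surjective linear map, α : W → ℝ locally Lipschitz, and σ = α ∘ r. Then for every c ∈ V, the Clarke subdifferential satisfies ∂σ(c) = r*(∂α(r c)), where r* : W* → V* is the adjoint of r. -/
/-!
A surjective linear map between finite-dimensional spaces is continuous and, by the open
mapping theorem, open, so `r` maps the filter `𝓝 c ×ˢ 𝓝[>] 0` onto
`𝓝 (r c) ×ˢ 𝓝[>] 0` and turns the difference quotients of `α ∘ r` in direction `v` into those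
of `α` in direction `r v`; hence `(α ∘ r)°(c, v) = α°(r c, r v)`. In particular `(α ∘ r)°(c, ·)`
vanishes on `ker r`, so every element of `∂(α ∘ r)(c)`, being bounded above by it on the
subspace `ker r`, annihilates `ker r` and therefore factors as `g ∘ r`; such a `g` lies
in `∂α(r c)` because `r` is surjective.
-/

open Filter Topology

/-- The Clarke generalized directional derivative of `f` at `x` in direction `v`. -/
noncomputable def clarkeDeriv {V : Type*} [NormedAddCommGroup V] [NormedSpace ℝ V]
    (f : V → ℝ) (x v : V) : ℝ :=
  Filter.limsup (fun p : V × ℝ => (f (p.1 + p.2 • v) - f p.1) / p.2)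
    ((nhds x) ×ˢ (nhdsWithin 0 (Set.Ioi 0)))

/-- The Clarke subdifferential of `f` at `x`: all linear functionals dominated by the
Clarke generalized directional derivative `f°(x, ·)`. -/
def clarkeSubdiff {V : Type*} [NormedAddCommGroup V] [NormedSpace ℝ V]
    (f : V → ℝ) (x : V) : Set (V →ₗ[ℝ] ℝ) :=
  {g | ∀ v : V, g v ≤ clarkeDeriv f x v}

section Clarke

variable {V W : Type*} [NormedAddCommGroup V] [NormedSpace ℝ V]
  [NormedAddCommGroup W] [NormedSpace ℝ W]

lemma clarkeDeriv_zero (f : V → ℝ) (x : V) : clarkeDeriv f x 0 = 0 := by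
  have hquot : (fun p : V × ℝ => (f (p.1 + p.2 • (0 : V)) - f p.1) / p.2) = fun _ => 0 := by
    ext p
    simp
  rw [clarkeDeriv, hquot]
  exact limsup_const 0

lemma clarkeDeriv_comp_of_isOpenMap (r : V →ₗ[ℝ] W) (hcont : Continuous r) (hopen : IsOpenMap r)
    (α : W → ℝ) (c v : V) :
    clarkeDeriv (α ∘ r) c v = clarkeDeriv α (r c) (r v) := by
  have hmap : map r (𝓝 c) = 𝓝 (r c) := le_antisymm hcont.continuousAt (hopen.nhds_le c)
  have hquot : (fun p : V × ℝ => ((α ∘ r) (p.1 + p.2 • v) - (α ∘ r) p.1) / p.2)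
      = (fun q : W × ℝ => (α (q.1 + q.2 • r v) - α q.1) / q.2) ∘ Prod.map r id := by
    ext p
    simp
  rw [clarkeDeriv, clarkeDeriv, hquot, limsup_comp, ← prod_map_left, hmap]

lemma mem_dualAnnihilator_ker_of_mem_clarkeSubdiff_comp (r : V →ₗ[ℝ] W) (hcont : Continuous r)
    (hopen : IsOpenMap r) (α : W → ℝ) {c : V} {h : V →ₗ[ℝ] ℝ}
    (hh : h ∈ clarkeSubdiff (α ∘ r) c) :
    h ∈ (LinearMap.ker r).dualAnnihilator := by
  rw [Submodule.mem_dualAnnihilator]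
  intro v hv
  have hderiv : ∀ u ∈ LinearMap.ker r, clarkeDeriv (α ∘ r) c u = 0 := fun u hu => by
    rw [clarkeDeriv_comp_of_isOpenMap r hcont hopen, LinearMap.mem_ker.mp hu, clarkeDeriv_zero]
  have hle := hh v
  have hle_neg := hh (-v)
  rw [hderiv v hv] at hle
  rw [hderiv (-v) (neg_mem hv), map_neg] at hle_neg
  linarith

end Clarke

theorem stmt1_general {V W : Type*} [NormedAddCommGroup V] [NormedSpace ℝ V] [FiniteDimensional ℝ V]
    [NormedAddCommGroup W] [NormedSpace ℝ W] [FiniteDimensional ℝ W]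
    (r : V →ₗ[ℝ] W) (hr : Function.Surjective r) (α : W → ℝ)
    (c : V) :
    clarkeSubdiff (α ∘ r) c = (fun g : W →ₗ[ℝ] ℝ => g.comp r) '' clarkeSubdiff α (r c) := by
  have hcont : Continuous r := r.continuous_of_finiteDimensional
  have hopen : IsOpenMap r := (LinearMap.toContinuousLinearMap r).isOpenMap hr
  have hderiv := clarkeDeriv_comp_of_isOpenMap r hcont hopen α c
  ext h
  constructor
  · intro hh
    obtain ⟨g, rfl⟩ : h ∈ LinearMap.range r.dualMap := by
      rw [LinearMap.range_dualMap_eq_dualAnnihilator_ker]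
      exact mem_dualAnnihilator_ker_of_mem_clarkeSubdiff_comp r hcont hopen α hh
    refine ⟨g, fun w => ?_, rfl⟩
    obtain ⟨v, rfl⟩ := hr w
    rw [← hderiv]
    exact hh v
  · rintro ⟨g, hg, rfl⟩ v
    rw [hderiv]
    exact hg (r v)

/-- For a surjective linear map `r : V → W` and locally Lipschitz `α : W → ℝ`,
the Clarke subdifferential of `σ = α ∘ r` satisfies `∂σ(c) = r*(∂α(r c))`. -/
theorem stmt1 {V W : Type*} [NormedAddCommGroup V] [NormedSpace ℝ V] [FiniteDimensional ℝ V]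
    [NormedAddCommGroup W] [NormedSpace ℝ W] [FiniteDimensional ℝ W]
    (r : V →ₗ[ℝ] W) (hr : Function.Surjective r) (α : W → ℝ) (hα : LocallyLipschitz α)
    (c : V) :
    clarkeSubdiff (α ∘ r) c = (fun g : W →ₗ[ℝ] ℝ => g.comp r) '' clarkeSubdiff α (r c) :=
  stmt1_general r hr α c
end

section
/- Let f : V → ℝ be locally Lipschitz on a finite-dimensional real normed space V. Then for all x, y ∈ V there exist t ∈ (0,1) and v* in the Clarke subdifferential ∂f(ty + (1−t)x) such that ⟨v*, x − y⟩ = f(x) − f(y). -/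
open Filter

namespace ClarkeAux

open Set

variable {V : Type*} [NormedAddCommGroup V] [NormedSpace ℝ V]

/-- The difference quotient appearing in the Clarke derivative. -/
noncomputable def q (f : V → ℝ) (v : V) : V × ℝ → ℝ :=
  fun p => (f (p.1 + p.2 • v) - f p.1) / p.2

/-- The filter used in the Clarke derivative. -/
def Fz (z : V) : Filter (V × ℝ) := (nhds z) ×ˢ (nhdsWithin 0 (Set.Ioi 0))

lemma clarkeDeriv_eq (f : V → ℝ) (z v : V) :
    clarkeDeriv f z v = limsup (q f v) (Fz z) := rfl

instance neBot (z : V) : (Fz z).NeBot := by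
  unfold Fz; infer_instance


lemma ibuLE {α : Type*} {l : Filter α} {u : α → ℝ} {C : ℝ} (h : ∀ᶠ p in l, u p ≤ C) :
    l.IsBoundedUnder (· ≤ ·) u := ⟨C, by rwa [Filter.eventually_map]⟩

lemma ibuGE {α : Type*} {l : Filter α} {u : α → ℝ} {C : ℝ} (h : ∀ᶠ p in l, C ≤ u p) :
    l.IsBoundedUnder (· ≥ ·) u := ⟨C, by rwa [Filter.eventually_map]⟩

/-- Local Lipschitz continuity gives a uniform bound on the difference quotients near `z`. -/
lemma bound {f : V → ℝ} (hf : LocallyLipschitz f) (z v : V) :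
    ∃ C : ℝ, ∀ᶠ p in Fz z, |q f v p| ≤ C := by
  obtain ⟨K, U, hU, hK⟩ := hf z
  obtain ⟨ε, hε, hball⟩ := Metric.mem_nhds_iff.mp hU
  refine ⟨K * ‖v‖, ?_⟩
  have h1 : Metric.ball z (ε / 2) ∈ nhds z :=
    Metric.ball_mem_nhds z (by linarith)
  have h2 : Set.Ioo (0 : ℝ) (ε / (2 * (‖v‖ + 1))) ∈ nhdsWithin (0:ℝ) (Set.Ioi 0) := by
    apply Ioo_mem_nhdsGT_of_mem
    constructor
    · exact le_refl _
    · positivity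
  filter_upwards [Filter.prod_mem_prod h1 h2] with p hp
  obtain ⟨hp1, hp2⟩ := hp
  have hvpos : (0:ℝ) < ‖v‖ + 1 := by positivity
  have ht0 : 0 < p.2 := hp2.1
  have htlt : p.2 < ε / (2 * (‖v‖ + 1)) := hp2.2
  have hmem1 : p.1 ∈ U := hball (by
    exact Metric.ball_subset_ball (by linarith) hp1)
  have hkey : ‖p.2 • v‖ ≤ ε / 2 := by
    rw [norm_smul, Real.norm_eq_abs, abs_of_pos ht0]
    have : p.2 * ‖v‖ ≤ (ε / (2 * (‖v‖ + 1))) * ‖v‖ :=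
      mul_le_mul_of_nonneg_right htlt.le (norm_nonneg v)
    refine this.trans ?_
    rw [div_mul_eq_mul_div, div_le_iff₀ (by positivity)]
    have hnn : (0:ℝ) ≤ ‖v‖ := norm_nonneg v
    nlinarith
  have hmem2 : p.1 + p.2 • v ∈ U := by
    apply hball
    rw [Metric.mem_ball, dist_eq_norm]
    have : ‖p.1 + p.2 • v - z‖ ≤ ‖p.1 - z‖ + ‖p.2 • v‖ := by
      have : p.1 + p.2 • v - z = (p.1 - z) + p.2 • v := by abel
      rw [this]; exact norm_add_le _ _
    have h1' : ‖p.1 - z‖ < ε / 2 := by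
      rw [Metric.mem_ball, dist_eq_norm] at hp1; exact hp1
    linarith
  have hdist : |f (p.1 + p.2 • v) - f p.1| ≤ K * (p.2 * ‖v‖) := by
    have := hK.dist_le_mul _ hmem2 _ hmem1
    rw [Real.dist_eq, dist_eq_norm, add_sub_cancel_left, norm_smul,
      Real.norm_eq_abs, abs_of_pos ht0] at this
    exact this
  show |(f (p.1 + p.2 • v) - f p.1) / p.2| ≤ K * ‖v‖
  rw [abs_div, abs_of_pos ht0, div_le_iff₀ ht0]
  calc |f (p.1 + p.2 • v) - f p.1| ≤ K * (p.2 * ‖v‖) := hdist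
    _ = K * ‖v‖ * p.2 := by ring

lemma isBoundedUnder_le {f : V → ℝ} (hf : LocallyLipschitz f) (z v : V) :
    (Fz z).IsBoundedUnder (· ≤ ·) (q f v) := by
  obtain ⟨C, hC⟩ := bound hf z v
  exact ibuLE (by filter_upwards [hC] with p hp using (abs_le.mp hp).2)

lemma isBoundedUnder_ge {f : V → ℝ} (hf : LocallyLipschitz f) (z v : V) :
    (Fz z).IsBoundedUnder (· ≥ ·) (q f v) := by
  obtain ⟨C, hC⟩ := bound hf z v
  exact ibuGE (by filter_upwards [hC] with p hp using (abs_le.mp hp).1)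

lemma isCoboundedUnder_le {f : V → ℝ} (hf : LocallyLipschitz f) (z v : V) :
    (Fz z).IsCoboundedUnder (· ≤ ·) (q f v) :=
  (isBoundedUnder_ge hf z v).isCoboundedUnder_le

/-- Limsup along a pushforward is at most the limsup along the target filter. -/
lemma limsup_comp_le {α β : Type*} {m : α → β} {F : Filter α} {G : Filter β}
    (hm : Tendsto m F G) {u : β → ℝ}
    (hco : F.IsCoboundedUnder (· ≤ ·) (u ∘ m))
    (hb : G.IsBoundedUnder (· ≤ ·) u) :
    limsup (u ∘ m) F ≤ limsup u G := by
  have h1 : limsup (u ∘ m) F = limsup u (Filter.map m F) := by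
    simp only [limsup, limsSup, Filter.map_map]
  rw [h1]
  refine limsup_le_limsup_of_le hm ?_ hb
  unfold Filter.IsCoboundedUnder
  rw [Filter.map_map]
  exact hco

lemma tendsto_rescale (z : V) {c : ℝ} (hc : 0 < c) :
    Tendsto (fun p : V × ℝ => (p.1, c * p.2)) (Fz z) (Fz z) := by
  apply Tendsto.prodMk
  · exact tendsto_fst
  · apply Tendsto.comp (g := fun t : ℝ => c * t) ?_ tendsto_snd
    rw [tendsto_nhdsWithin_iff]
    constructor
    · have : Tendsto (fun t : ℝ => c * t) (nhds 0) (nhds (c * 0)) :=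
        (continuous_const.mul continuous_id).tendsto 0
      rw [mul_zero] at this
      exact this.mono_left nhdsWithin_le_nhds
    · filter_upwards [self_mem_nhdsWithin] with t ht
      exact mul_pos hc ht

lemma clarkeDeriv_zero {f : V → ℝ} (z : V) : clarkeDeriv f z 0 = 0 := by
  rw [clarkeDeriv_eq]
  have : q f (0 : V) = fun _ => (0:ℝ) := by
    funext p
    simp [q]
  rw [this]
  exact limsup_const 0

lemma clarkeDeriv_smul {f : V → ℝ} (hf : LocallyLipschitz f) (z v : V) {c : ℝ} (hc : 0 < c) :
    clarkeDeriv f z (c • v) = c * clarkeDeriv f z v := by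
  set m : V × ℝ → V × ℝ := fun p => (p.1, c * p.2) with hm_def
  set m' : V × ℝ → V × ℝ := fun p => (p.1, c⁻¹ * p.2) with hm'_def
  have hm : Tendsto m (Fz z) (Fz z) := tendsto_rescale z hc
  have hm' : Tendsto m' (Fz z) (Fz z) := tendsto_rescale z (inv_pos.mpr hc)
  have key : q f (c • v) = fun p => c * (q f v ∘ m) p := by
    funext p
    show (f (p.1 + p.2 • (c • v)) - f p.1) / p.2
      = c * ((f (p.1 + (c * p.2) • v) - f p.1) / (c * p.2))
    rw [smul_smul, mul_comm p.2 c]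
    rw [mul_div_assoc']
    rw [mul_div_mul_left _ _ hc.ne']
  -- boundedness facts
  obtain ⟨C, hC⟩ := bound hf z v
  have hCm : ∀ᶠ p in Fz z, |q f v (m p)| ≤ C := hm.eventually hC
  have b1 : (Fz z).IsBoundedUnder (· ≤ ·) (q f v ∘ m) :=
    ibuLE (by filter_upwards [hCm] with p hp using (abs_le.mp hp).2)
  have b2 : (Fz z).IsBoundedUnder (· ≥ ·) (q f v ∘ m) :=
    ibuGE (by filter_upwards [hCm] with p hp using (abs_le.mp hp).1)
  have co1 : (Fz z).IsCoboundedUnder (· ≤ ·) (q f v ∘ m) := b2.isCoboundedUnder_le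
  have b3 : (Fz z).IsBoundedUnder (· ≤ ·) (fun p => c * (q f v ∘ m) p) :=
    ibuLE (by filter_upwards [hCm] with p hp using
      mul_le_mul_of_nonneg_left (abs_le.mp hp).2 hc.le)
  have b4 : (Fz z).IsBoundedUnder (· ≥ ·) (fun p => c * (q f v ∘ m) p) :=
    ibuGE (by filter_upwards [hCm] with p hp using
      mul_le_mul_of_nonneg_left (abs_le.mp hp).1 hc.le)
  have co3 : (Fz z).IsCoboundedUnder (· ≤ ·) (fun p => c * (q f v ∘ m) p) :=
    b4.isCoboundedUnder_le
  have step1 : clarkeDeriv f z (c • v) = c * limsup (q f v ∘ m) (Fz z) := by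
    rw [clarkeDeriv_eq, key]
    exact ((OrderIso.mulLeft₀ c hc).limsup_apply b1 co1 b3 co3).symm
  have step2 : limsup (q f v ∘ m) (Fz z) = limsup (q f v) (Fz z) := by
    apply le_antisymm
    · exact limsup_comp_le hm co1 (isBoundedUnder_le hf z v)
    · have hcomp : q f v = (q f v ∘ m) ∘ m' := by
        funext p
        show q f v p = q f v (p.1, c * (c⁻¹ * p.2))
        rw [← mul_assoc, mul_inv_cancel₀ hc.ne', one_mul]
      calc limsup (q f v) (Fz z) = limsup ((q f v ∘ m) ∘ m') (Fz z) := by rw [← hcomp]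
        _ ≤ limsup (q f v ∘ m) (Fz z) := by
            apply limsup_comp_le hm' _ b1
            rw [← hcomp]
            exact isCoboundedUnder_le hf z v
  rw [step1, step2, clarkeDeriv_eq]

lemma clarkeDeriv_add_le {f : V → ℝ} (hf : LocallyLipschitz f) (z v w : V) :
    clarkeDeriv f z (v + w) ≤ clarkeDeriv f z v + clarkeDeriv f z w := by
  set m : V × ℝ → V × ℝ := fun p => (p.1 + p.2 • v, p.2) with hm_def
  have hm : Tendsto m (Fz z) (Fz z) := by
    apply Tendsto.prodMk
    · have h1 : Tendsto (fun p : V × ℝ => p.1) (Fz z) (nhds z) := tendsto_fst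
      have h2 : Tendsto (fun p : V × ℝ => p.2) (Fz z) (nhds 0) :=
        tendsto_snd.mono_right nhdsWithin_le_nhds
      have := h1.add (h2.smul_const v)
      rw [zero_smul, add_zero] at this
      exact this
    · exact tendsto_snd
  have key : q f (v + w) = fun p => q f v p + (q f w ∘ m) p := by
    funext p
    show (f (p.1 + p.2 • (v + w)) - f p.1) / p.2
      = (f (p.1 + p.2 • v) - f p.1) / p.2
        + (f (p.1 + p.2 • v + p.2 • w) - f (p.1 + p.2 • v)) / p.2
    rw [← add_div, smul_add, ← add_assoc]
    ring_nf
  obtain ⟨C, hC⟩ := bound hf z w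
  have hCm : ∀ᶠ p in Fz z, |q f w (m p)| ≤ C := hm.eventually hC
  have bw1 : (Fz z).IsBoundedUnder (· ≤ ·) (q f w ∘ m) :=
    ibuLE (by filter_upwards [hCm] with p hp using (abs_le.mp hp).2)
  have bw2 : (Fz z).IsBoundedUnder (· ≥ ·) (q f w ∘ m) :=
    ibuGE (by filter_upwards [hCm] with p hp using (abs_le.mp hp).1)
  rw [clarkeDeriv_eq, key]
  have hadd : limsup (fun p => q f v p + (q f w ∘ m) p) (Fz z)
      ≤ limsup (q f v) (Fz z) + limsup (q f w ∘ m) (Fz z) := by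
    exact limsup_add_le (isBoundedUnder_ge hf z v) (isBoundedUnder_le hf z v)
      bw2.isCoboundedUnder_le bw1
  refine hadd.trans ?_
  have : limsup (q f w ∘ m) (Fz z) ≤ limsup (q f w) (Fz z) :=
    limsup_comp_le hm bw2.isCoboundedUnder_le (isBoundedUnder_le hf z w)
  exact add_le_add_right this _ |>.trans (by rw [clarkeDeriv_eq, clarkeDeriv_eq])

/-- Hahn–Banach step: produce an element of the Clarke subdifferential with prescribed value. -/
lemma exists_mem_clarkeSubdiff {f : V → ℝ} (hf : LocallyLipschitz f) (z w : V) (c₀ : ℝ)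
    (h1 : c₀ ≤ clarkeDeriv f z w) (h2 : -c₀ ≤ clarkeDeriv f z (-w)) :
    ∃ g ∈ clarkeSubdiff f z, g w = c₀ := by
  set N := clarkeDeriv f z with hN
  have Nhom : ∀ c : ℝ, 0 < c → ∀ v, N (c • v) = c * N v := fun c hc v =>
    clarkeDeriv_smul hf z v hc
  have Nadd : ∀ v u, N (v + u) ≤ N v + N u := fun v u => clarkeDeriv_add_le hf z v u
  have N0 : N 0 = 0 := clarkeDeriv_zero z
  by_cases hw : w = 0
  · have hc0 : c₀ = 0 := by
      rw [hw] at h1 h2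
      rw [neg_zero] at h2
      rw [N0] at h1 h2
      linarith
    obtain ⟨g, _, hg2⟩ := exists_extension_of_le_sublinear ⟨⊥, 0⟩ N Nhom Nadd (fun u => by
      have hu : (u : V) = 0 := (Submodule.mem_bot ℝ).mp u.2
      show (0 : (⊥ : Submodule ℝ V) →ₗ[ℝ] ℝ) u ≤ N (u : V)
      rw [hu, N0]
      simp)
    exact ⟨g, hg2, by rw [hw, hc0, map_zero]⟩
  · set ℓ := (LinearPMap.mkSpanSingleton (K := ℝ) w c₀ hw : V →ₗ.[ℝ] ℝ) with hℓ
    have hle : ∀ u : ℓ.domain, ℓ u ≤ N u := by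
      rintro ⟨u, hu⟩
      obtain ⟨a, ha⟩ := Submodule.mem_span_singleton.mp hu
      have happ : ℓ ⟨u, hu⟩ = a * c₀ := by
        have : ℓ ⟨a • w, ha ▸ hu⟩ = a • c₀ :=
          LinearPMap.mkSpanSingleton'_apply _ _ _ a _
        simp only [smul_eq_mul] at this
        rw [← this]
        congr 1
        exact Subtype.ext ha.symm
      rw [happ]
      rcases lt_trichotomy a 0 with hlt | heq | hgt
      · have : N (u : V) = (-a) * N (-w) := by
          rw [← ha, show a • w = (-a) • (-w) by rw [smul_neg, neg_smul, neg_neg],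
            Nhom (-a) (by linarith) (-w)]
        rw [this]
        have : a * c₀ = (-a) * (-c₀) := by ring
        rw [this]
        exact mul_le_mul_of_nonneg_left h2 (by linarith)
      · subst heq
        have : (u : V) = 0 := by rw [← ha, zero_smul]
        simp only [zero_mul]
        rw [this, N0]
      · have : N (u : V) = a * N w := by rw [← ha, Nhom a hgt w]
        rw [this]
        exact mul_le_mul_of_nonneg_left h1 hgt.le
    obtain ⟨g, hg1, hg2⟩ := exists_extension_of_le_sublinear ℓ N Nhom Nadd hle
    refine ⟨g, hg2, ?_⟩
    have hmem : w ∈ ℓ.domain := Submodule.mem_span_singleton_self w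
    have := hg1 ⟨w, hmem⟩
    rw [this]
    exact LinearPMap.mkSpanSingleton_apply ℝ ℝ hw c₀

/-- At a local extremum, the Clarke derivative is nonnegative in all directions. -/
lemma clarkeDeriv_nonneg_of_localExtr {h : ℝ → ℝ} (hh : LocallyLipschitz h) {c : ℝ}
    (hc : IsLocalMin h c ∨ IsLocalMax h c) (s : ℝ) : 0 ≤ clarkeDeriv h c s := by
  rw [clarkeDeriv_eq]
  apply le_limsup_of_frequently_le _ (isBoundedUnder_le hh c s)
  rcases hc with hc | hc
  · have hm : Tendsto (fun t : ℝ => ((c, t) : ℝ × ℝ)) (nhdsWithin 0 (Set.Ioi 0)) (Fz c) :=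
      Tendsto.prodMk tendsto_const_nhds tendsto_id
    apply hm.frequently
    have ev1 : ∀ᶠ t in nhdsWithin (0:ℝ) (Set.Ioi 0), h c ≤ h (c + t • s) := by
      have ht : Tendsto (fun t : ℝ => c + t • s) (nhdsWithin 0 (Set.Ioi 0)) (nhds c) := by
        have : Tendsto (fun t : ℝ => c + t • s) (nhds 0) (nhds (c + (0:ℝ) • s)) :=
          (continuous_const.add (continuous_id.smul continuous_const)).tendsto 0
        rw [zero_smul, add_zero] at this
        exact this.mono_left nhdsWithin_le_nhds
      exact ht.eventually hc
    have ev2 : ∀ᶠ t in nhdsWithin (0:ℝ) (Set.Ioi 0), (0:ℝ) < t := self_mem_nhdsWithin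
    exact ((ev1.and ev2).mono fun t ⟨h1', h2'⟩ => by
      show (0:ℝ) ≤ q h s (c, t)
      exact div_nonneg (by simpa using sub_nonneg.mpr h1') h2'.le).frequently
  · have hm : Tendsto (fun t : ℝ => ((c - t • s, t) : ℝ × ℝ)) (nhdsWithin 0 (Set.Ioi 0)) (Fz c) := by
      apply Tendsto.prodMk
      · have : Tendsto (fun t : ℝ => c - t • s) (nhds 0) (nhds (c - (0:ℝ) • s)) :=
          (continuous_const.sub (continuous_id.smul continuous_const)).tendsto 0
        rw [zero_smul, sub_zero] at this
        exact this.mono_left nhdsWithin_le_nhds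
      · exact tendsto_id
    apply hm.frequently
    have ev1 : ∀ᶠ t in nhdsWithin (0:ℝ) (Set.Ioi 0), h (c - t • s) ≤ h c := by
      have ht : Tendsto (fun t : ℝ => c - t • s) (nhdsWithin 0 (Set.Ioi 0)) (nhds c) := by
        have : Tendsto (fun t : ℝ => c - t • s) (nhds 0) (nhds (c - (0:ℝ) • s)) :=
          (continuous_const.sub (continuous_id.smul continuous_const)).tendsto 0
        rw [zero_smul, sub_zero] at this
        exact this.mono_left nhdsWithin_le_nhds
      exact ht.eventually hc
    have ev2 : ∀ᶠ t in nhdsWithin (0:ℝ) (Set.Ioi 0), (0:ℝ) < t := self_mem_nhdsWithin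
    exact ((ev1.and ev2).mono fun t ⟨h1', h2'⟩ => by
      show (0:ℝ) ≤ q h s (c - t • s, t)
      have : c - t • s + t • s = c := by abel
      unfold q
      rw [this]
      exact div_nonneg (sub_nonneg.mpr h1') h2'.le).frequently

/-- Chain inequality along a line. -/
lemma clarkeDeriv_comp_line {f : V → ℝ} (hf : LocallyLipschitz f) (x w : V) (c s : ℝ) :
    clarkeDeriv (fun t : ℝ => f (x + t • w)) c s ≤ clarkeDeriv f (x + c • w) (s • w) := by
  set m : ℝ × ℝ → V × ℝ := fun p => (x + p.1 • w, p.2) with hm_def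
  have key : q (fun t : ℝ => f (x + t • w)) s = q f (s • w) ∘ m := by
    funext p
    show (f (x + (p.1 + p.2 • s) • w) - f (x + p.1 • w)) / p.2
      = (f (x + p.1 • w + p.2 • (s • w)) - f (x + p.1 • w)) / p.2
    congr 3
    rw [add_smul, smul_smul, add_assoc]
    congr 2
  have hm : Tendsto m (Fz c) (Fz (x + c • w)) := by
    apply Tendsto.prodMk
    · have h1 : Tendsto (fun p : ℝ × ℝ => p.1) (Fz c) (nhds c) := tendsto_fst
      have h2 : Tendsto (fun t : ℝ => x + t • w) (nhds c) (nhds (x + c • w)) :=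
        (continuous_const.add (continuous_id.smul continuous_const)).tendsto c
      exact h2.comp h1
    · exact tendsto_snd
  rw [clarkeDeriv_eq, key]
  apply limsup_comp_le hm
  · obtain ⟨C, hC⟩ := bound hf (x + c • w) (s • w)
    have hCm : ∀ᶠ p in Fz c, |q f (s • w) (m p)| ≤ C := hm.eventually hC
    exact Filter.IsBoundedUnder.isCoboundedUnder_le
      (ibuGE (by filter_upwards [hCm] with p hp using (abs_le.mp hp).1))
  · exact isBoundedUnder_le hf (x + c • w) (s • w)

/-- Adding a linear function shifts the Clarke derivative. -/
lemma clarkeDeriv_add_linear {F : ℝ → ℝ} (hF : LocallyLipschitz F) (c s k : ℝ) :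
    clarkeDeriv (fun t => F t + t * k) c s = clarkeDeriv F c s + s * k := by
  have key : ∀ᶠ p in Fz c, q (fun t => F t + t * k) s p = q F s p + s * k := by
    have ev2 : ∀ᶠ p in Fz c, (0:ℝ) < p.2 := by
      have : ∀ᶠ t in nhdsWithin (0:ℝ) (Set.Ioi 0), (0:ℝ) < t := self_mem_nhdsWithin
      exact Filter.Eventually.prod_inr this _
    filter_upwards [ev2] with p hp
    show (F (p.1 + p.2 • s) + (p.1 + p.2 • s) * k - (F p.1 + p.1 * k)) / p.2
      = (F (p.1 + p.2 • s) - F p.1) / p.2 + s * k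
    have : F (p.1 + p.2 • s) + (p.1 + p.2 • s) * k - (F p.1 + p.1 * k)
        = (F (p.1 + p.2 • s) - F p.1) + p.2 * (s * k) := by
      simp only [smul_eq_mul]; ring
    rw [this, add_div, mul_div_cancel_left₀ _ hp.ne']
  rw [clarkeDeriv_eq, limsup_congr key, clarkeDeriv_eq]
  have b1 := isBoundedUnder_le hF c s
  have b2 := isBoundedUnder_ge hF c s
  have co1 := b2.isCoboundedUnder_le
  have b3 : (Fz c).IsBoundedUnder (· ≤ ·) (fun p => q F s p + s * k) := by
    obtain ⟨C, hC⟩ := b1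
    rw [Filter.eventually_map] at hC
    exact ibuLE (C := C + s * k) (by filter_upwards [hC] with p hp using by linarith)
  have b4 : (Fz c).IsBoundedUnder (· ≥ ·) (fun p => q F s p + s * k) := by
    obtain ⟨C, hC⟩ := b2
    rw [Filter.eventually_map] at hC
    exact ibuGE (C := C + s * k)
      (by filter_upwards [hC] with p hp using add_le_add_left hp _)
  have co3 := b4.isCoboundedUnder_le
  have hiso := (OrderIso.addRight (s * k)).limsup_apply b1 co1 b3 co3
  simp only [OrderIso.addRight_apply] at hiso
  exact hiso.symm

lemma lipschitz_line (x w : V) : LocallyLipschitz (fun t : ℝ => x + t • w) := by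
  apply LipschitzWith.locallyLipschitz (K := ‖w‖₊)
  apply LipschitzWith.of_dist_le_mul
  intro a b
  rw [dist_eq_norm, dist_eq_norm]
  have : x + a • w - (x + b • w) = (a - b) • w := by
    rw [sub_smul]; abel
  rw [this, norm_smul, Real.norm_eq_abs, ← Real.norm_eq_abs, ← dist_eq_norm]
  rw [mul_comm]
  rfl

lemma lipschitz_mul_const (k : ℝ) : LocallyLipschitz (fun t : ℝ => t * k) := by
  apply LipschitzWith.locallyLipschitz (K := ‖k‖₊)
  apply LipschitzWith.of_dist_le_mul
  intro a b
  rw [Real.dist_eq, Real.dist_eq]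
  have : a * k - b * k = (a - b) * k := by ring
  rw [this, abs_mul, mul_comm]
  rfl

end ClarkeAux

open ClarkeAux in
/-- Lebourg's mean value theorem: for a locally Lipschitz `f` on a finite-dimensional
normed space and any `x, y`, there are `t ∈ (0,1)` and `v* ∈ ∂f(t y + (1-t) x)` with
`⟨v*, x - y⟩ = f x - f y`. -/
theorem stmt2 {V : Type*} [NormedAddCommGroup V] [NormedSpace ℝ V] [FiniteDimensional ℝ V]
    (f : V → ℝ) (hf : LocallyLipschitz f) (x y : V) :
    ∃ t ∈ Set.Ioo (0:ℝ) 1, ∃ g ∈ clarkeSubdiff f (t • y + (1 - t) • x),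
      g (x - y) = f x - f y := by
  set c₀ := f x - f y with hc₀
  set w := y - x with hw
  set F : ℝ → ℝ := fun t => f (x + t • w) with hF
  set h : ℝ → ℝ := fun t => F t + t * c₀ with hh
  have hFlip : LocallyLipschitz F := hf.comp (lipschitz_line x w)
  have hhlip : LocallyLipschitz h := hFlip.add (lipschitz_mul_const c₀)
  have hcont : ContinuousOn h (Set.Icc 0 1) := hhlip.continuous.continuousOn
  have h0 : h 0 = f x := by
    simp only [hh, hF, zero_smul, add_zero, zero_mul]
  have h1 : h 1 = f x := by
    simp only [hh, hF, one_smul, one_mul, hw, hc₀]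
    have : x + (y - x) = y := by abel
    rw [this]
    ring
  -- find an interior local extremum of h
  obtain ⟨a, haI, hamax⟩ := isCompact_Icc.exists_isMaxOn (Set.nonempty_Icc.mpr zero_le_one) hcont
  obtain ⟨b, hbI, hbmin⟩ := isCompact_Icc.exists_isMinOn (Set.nonempty_Icc.mpr zero_le_one) hcont
  have hex : ∃ c ∈ Set.Ioo (0:ℝ) 1, IsLocalMin h c ∨ IsLocalMax h c := by
    by_cases hA : f x < h a
    · refine ⟨a, ?_, Or.inr ?_⟩
      · rcases haI.1.lt_or_eq with h' | h'
        · rcases haI.2.lt_or_eq with h'' | h''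
          · exact ⟨h', h''⟩
          · exfalso; rw [h'', h1] at hA; exact lt_irrefl _ hA
        · exfalso; rw [← h'] at hA; rw [h0] at hA; exact lt_irrefl _ hA
      · have hmem : Set.Icc (0:ℝ) 1 ∈ nhds a := by
          apply Filter.mem_of_superset (Ioo_mem_nhds ?_ ?_) Set.Ioo_subset_Icc_self
          · rcases haI.1.lt_or_eq with h' | h'
            · exact h'
            · exfalso; rw [← h', h0] at hA; exact lt_irrefl _ hA
          · rcases haI.2.lt_or_eq with h' | h'
            · exact h'
            · exfalso; rw [h', h1] at hA; exact lt_irrefl _ hA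
        exact hamax.isLocalMax hmem
    · by_cases hB : h b < f x
      · refine ⟨b, ?_, Or.inl ?_⟩
        · rcases hbI.1.lt_or_eq with h' | h'
          · rcases hbI.2.lt_or_eq with h'' | h''
            · exact ⟨h', h''⟩
            · exfalso; rw [h'', h1] at hB; exact lt_irrefl _ hB
          · exfalso; rw [← h', h0] at hB; exact lt_irrefl _ hB
        · have hmem : Set.Icc (0:ℝ) 1 ∈ nhds b := by
            apply Filter.mem_of_superset (Ioo_mem_nhds ?_ ?_) Set.Ioo_subset_Icc_self
            · rcases hbI.1.lt_or_eq with h' | h'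
              · exact h'
              · exfalso; rw [← h', h0] at hB; exact lt_irrefl _ hB
            · rcases hbI.2.lt_or_eq with h' | h'
              · exact h'
              · exfalso; rw [h', h1] at hB; exact lt_irrefl _ hB
          exact hbmin.isLocalMin hmem
      · -- h is constant (= f x) on Icc 0 1
        push_neg at hA hB
        have hconst : ∀ t ∈ Set.Icc (0:ℝ) 1, h t = f x := by
          intro t ht
          have hle : h t ≤ h a := hamax ht
          have hge : h b ≤ h t := hbmin ht
          have h0mem : (0:ℝ) ∈ Set.Icc (0:ℝ) 1 := ⟨le_refl 0, zero_le_one⟩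
          have h1' : h a ≤ f x := hA
          have h2' : f x ≤ h b := hB
          linarith
        refine ⟨1/2, by norm_num, Or.inl ?_⟩
        have hmem : Set.Ioo (0:ℝ) 1 ∈ nhds (1/2 : ℝ) := Ioo_mem_nhds (by norm_num) (by norm_num)
        have : ∀ᶠ t in nhds (1/2 : ℝ), h t = f x := by
          filter_upwards [hmem] with t ht using hconst t (Set.Ioo_subset_Icc_self ht)
        have hhalf : h (1/2 : ℝ) = f x := hconst _ (by norm_num)
        filter_upwards [this] with t ht
        rw [ht, hhalf]
  obtain ⟨c, hcI, hcext⟩ := hex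
  set z := x + c • w with hz
  -- clarkeDeriv inequalities
  have key : ∀ s : ℝ, 0 ≤ clarkeDeriv f z (s • w) + s * c₀ := by
    intro s
    have e1 : 0 ≤ clarkeDeriv h c s := clarkeDeriv_nonneg_of_localExtr hhlip hcext s
    have e2 : clarkeDeriv h c s = clarkeDeriv F c s + s * c₀ :=
      clarkeDeriv_add_linear hFlip c s c₀
    have e3 : clarkeDeriv F c s ≤ clarkeDeriv f z (s • w) :=
      clarkeDeriv_comp_line hf x w c s
    rw [e2] at e1
    linarith
  have k1 : -c₀ ≤ clarkeDeriv f z w := by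
    have := key 1
    rw [one_smul, one_mul] at this
    linarith
  have k2 : c₀ ≤ clarkeDeriv f z (-w) := by
    have := key (-1)
    rw [neg_one_smul, neg_one_mul] at this
    linarith
  have hxy : x - y = -w := by rw [hw]; abel
  obtain ⟨g, hg1, hg2⟩ := exists_mem_clarkeSubdiff hf z (-w) c₀ k2 (by rwa [neg_neg])
  refine ⟨c, hcI, g, ?_, ?_⟩
  · have hzeq : z = c • y + (1 - c) • x := by
      rw [hz, hw, smul_sub, sub_smul, one_smul]
      abel
    rwa [← hzeq]
  · rw [hxy]
    exact hg2
end

section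
/- Let α : ℝ^m → ℝ be a locally Lipschitz function such that α(c)/‖c‖ → ∞ as ‖c‖ → ∞ (superlinearity). Then the union over all c ∈ ℝ^m of the Clarke subdifferentials ∂α(c) is all of (ℝ^m)*. -/
open Filter

/-!
Superlinearity makes `α - h` coercive, so it attains a global minimum at some `c`. At a minimiser
of `α - h` every forward difference quotient `(α (c + t • v) - α c) / t` is at least `h v`. These
quotients are among those whose `limsup` defines `clarkeDeriv α c v`, and local Lipschitz
continuity bounds that family above, so the `limsup` is not a junk value and `h v ≤ α°(c; v)`.
-/

open Topology

section Superlinear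

variable {E : Type*} [NormedAddCommGroup E] [NormedSpace ℝ E] [ProperSpace E]

theorem tendsto_sub_cocompact_atTop_of_superlinear {f : E → ℝ}
    (hf : Tendsto (fun x => f x / ‖x‖) (cocompact E) atTop) (g : E →L[ℝ] ℝ) :
    Tendsto (fun x => f x - g x) (cocompact E) atTop := by
  have hnorm : Tendsto (fun x : E => ‖x‖) (cocompact E) atTop := tendsto_norm_cocompact_atTop
  have hslope : Tendsto (fun x => f x / ‖x‖ - ‖g‖) (cocompact E) atTop :=
    tendsto_atTop_add_const_right _ _ hf
  refine tendsto_atTop_mono' _ ?_ (hnorm.atTop_mul_atTop₀ hslope)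
  filter_upwards [hnorm.eventually_gt_atTop 0] with x hx
  have hgx : g x ≤ ‖g‖ * ‖x‖ := (le_abs_self _).trans (g.le_opNorm x)
  rw [mul_sub, mul_div_cancel₀ _ hx.ne']
  linarith

end Superlinear

section Clarke

variable {V : Type*} [NormedAddCommGroup V] [NormedSpace ℝ V]

theorem LipschitzOnWith.eventually_diffQuot_le {f : V → ℝ} {K : NNReal} {U : Set V} {x : V}
    (hU : U ∈ 𝓝 x) (hf : LipschitzOnWith K f U) (v : V) :
    ∀ᶠ p : V × ℝ in 𝓝 x ×ˢ 𝓝[>] 0, (f (p.1 + p.2 • v) - f p.1) / p.2 ≤ K * ‖v‖ := by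
  have hfilter : 𝓝 x ×ˢ 𝓝[>] (0 : ℝ) ≤ 𝓝 (x, 0) := by
    rw [nhds_prod_eq]; exact prod_mono le_rfl nhdsWithin_le_nhds
  have hshift : Tendsto (fun p : V × ℝ => p.1 + p.2 • v) (𝓝 x ×ˢ 𝓝[>] 0) (𝓝 x) := by
    have hcont : Continuous fun p : V × ℝ => p.1 + p.2 • v := by fun_prop
    simpa using (hcont.tendsto (x, 0)).mono_left hfilter
  filter_upwards [tendsto_fst.eventually hU, hshift.eventually hU,
    tendsto_snd.eventually self_mem_nhdsWithin] with p hp hpv (ht : 0 < p.2)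
  rw [div_le_iff₀ ht]
  calc f (p.1 + p.2 • v) - f p.1 ≤ dist (f (p.1 + p.2 • v)) (f p.1) := le_abs_self _
    _ ≤ K * dist (p.1 + p.2 • v) p.1 := hf.dist_le_mul _ hpv _ hp
    _ = K * ‖v‖ * p.2 := by
      rw [dist_eq_norm, add_sub_cancel_left, norm_smul, Real.norm_of_nonneg ht.le]; ring

theorem le_clarkeDeriv_of_frequently_le {f : V → ℝ} {K : NNReal} {U : Set V} {x : V}
    (hU : U ∈ 𝓝 x) (hf : LipschitzOnWith K f U) {v : V} {a : ℝ}
    (ha : ∃ᶠ t in 𝓝[>] (0 : ℝ), a ≤ (f (x + t • v) - f x) / t) :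
    a ≤ clarkeDeriv f x v := by
  have hray : Tendsto (fun t : ℝ => (x, t)) (𝓝[>] 0) (𝓝 x ×ˢ 𝓝[>] 0) :=
    tendsto_const_nhds.prodMk tendsto_id
  exact le_limsup_of_frequently_le (hray.frequently ha)
    ⟨_, eventually_map.mpr (hf.eventually_diffQuot_le hU v)⟩

theorem IsLocalMin.mem_clarkeSubdiff {f : V → ℝ} {K : NNReal} {U : Set V} {x : V}
    (hU : U ∈ 𝓝 x) (hf : LipschitzOnWith K f U) {g : V →ₗ[ℝ] ℝ}
    (hmin : IsLocalMin (fun y => f y - g y) x) : g ∈ clarkeSubdiff f x := by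
  intro v
  refine le_clarkeDeriv_of_frequently_le hU hf (Eventually.frequently ?_)
  have hray : Tendsto (fun t : ℝ => x + t • v) (𝓝[>] 0) (𝓝 x) := by
    have hcont : Continuous fun t : ℝ => x + t • v := by fun_prop
    simpa using (hcont.tendsto 0).mono_left nhdsWithin_le_nhds
  filter_upwards [hray.eventually hmin, self_mem_nhdsWithin] with t hle (ht : 0 < t)
  rw [le_div_iff₀ ht]
  simp only [map_add, map_smul, smul_eq_mul] at hle
  linarith

end Clarke

/-- If `α : ℝ^m → ℝ` is locally Lipschitz and superlinear (`α c / ‖c‖ → ∞` as `‖c‖ → ∞`),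
then every linear functional lies in the Clarke subdifferential `∂α(c)` for some `c`;
i.e. the union of all Clarke subdifferentials is all of `(ℝ^m)*`. -/
theorem stmt3 {m : ℕ} (α : EuclideanSpace ℝ (Fin m) → ℝ) (hα : LocallyLipschitz α)
    (hsuper : Filter.Tendsto (fun c : EuclideanSpace ℝ (Fin m) => α c / ‖c‖)
      (Filter.cocompact (EuclideanSpace ℝ (Fin m))) Filter.atTop) :
    ∀ h : EuclideanSpace ℝ (Fin m) →ₗ[ℝ] ℝ,
      ∃ c : EuclideanSpace ℝ (Fin m), h ∈ clarkeSubdiff α c := by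
  intro h
  let H := LinearMap.toContinuousLinearMap h
  obtain ⟨c, hc⟩ := (hα.continuous.sub H.continuous).exists_forall_le
    (tendsto_sub_cocompact_atTop_of_superlinear hsuper H)
  obtain ⟨K, U, hU, hK⟩ := hα c
  exact ⟨c, IsLocalMin.mem_clarkeSubdiff hU hK (Eventually.of_forall hc)⟩
end
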